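/- arXiv:1504.02151 — 4 statements merged into one kernel-verified Lean document; each statement's English description precedes it below -/
import Mathlib

section
/- Let G be a finite simple graph containing a fan F on distinct vertices w, u_1, …, u_r (r ≥ 2) with cutset edges j = (u_0, u_1), k = (x, w), l = (u_r, u_{r+1}). Then every Hamiltonian cycle τ of G that contains both k and l contains, among the edges with both endpoints in {w, u_1, …, u_r}, exactly the edges (w, u_1), (u_1, u_2), …, (u_{r−1}, u_r); that is, τ traverses F by the subsequence w, u_1, u_2, …, u_r (a left-traversal). -/
/-!
Only the degrees in the cycle matter: every vertex has exactly two cycle neighbours. Besides `x`,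
the hub `w` has one cycle neighbour `u a`. Any other rim vertex `u t` has lost its spoke, and its
only remaining neighbours in `G` are `u (t - 1)` and `u (t + 1)` (outside the fan when `t = 1` or
`t = r`), so it uses both rim edges. If `a ≥ 2`, then `u a` would be adjacent in the cycle to `w`,
`u (a - 1)` and `u (a + 1)` (through `l` when `a = r`). Hence `a = 1`, and the cycle edges inside
the fan are the spoke `w u 1` and the rim path.
-/

open SimpleGraph Set

namespace SimpleGraph.Subgraph

variable {V : Type*} {G : SimpleGraph V} {H : G.Subgraph} {z a b : V}

lemma adj_and_adj_of_neighborSet_subset_pair (h2 : (H.neighborSet z).ncard = 2)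
    (hsub : H.neighborSet z ⊆ {a, b}) : H.Adj z a ∧ H.Adj z b := by
  have heq : H.neighborSet z = {a, b} :=
    eq_of_subset_of_ncard_le hsub (h2 ▸ (ncard_insert_le a {b}).trans (by simp))
  have ha : a ∈ H.neighborSet z := heq ▸ mem_insert a {b}
  have hb : b ∈ H.neighborSet z := heq ▸ mem_insert_of_mem a rfl
  exact ⟨ha, hb⟩

lemma eq_or_eq_of_adj (h2 : (H.neighborSet z).ncard = 2) (hab : a ≠ b) (ha : H.Adj z a)
    (hb : H.Adj z b) {y : V} (hy : H.Adj z y) : y = a ∨ y = b := by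
  by_contra! hne
  have hsub : ({a, b, y} : Set V) ⊆ H.neighborSet z := by
    rintro v (rfl | rfl | rfl) <;> assumption
  have h3 := ncard_le_ncard hsub (finite_of_ncard_ne_zero (by omega))
  rw [ncard_eq_three.mpr ⟨a, b, y, hab, hne.1.symm, hne.2.symm, rfl⟩] at h3
  omega

lemma exists_adj_ne (h2 : (H.neighborSet z).ncard = 2) (a : V) : ∃ y, y ≠ a ∧ H.Adj z y := by
  by_contra! h
  have h1 := ncard_le_ncard (fun y hy => not_not.1 (h y · hy) : H.neighborSet z ⊆ {a})
  rw [ncard_singleton] at h1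
  omega

end SimpleGraph.Subgraph

namespace SimpleGraph.Fan

variable {V : Type*} {G : SimpleGraph V} {r : ℕ} {w x : V} {u : ℕ → V} {F : Set V}

lemma eq_of_adj_hub (hr : 1 ≤ r) (hF : F = insert w (u '' Icc 1 r))
    (hwu : ∀ i ∈ Icc 1 r, u i ≠ w)
    (hout : ∀ a ∈ F, ∀ b ∉ F, (G.Adj a b ↔
      (a = u 1 ∧ b = u 0) ∨ (a = w ∧ b = x) ∨ (a = u r ∧ b = u (r + 1))))
    {y : V} (hy : G.Adj w y) : y = x ∨ ∃ i ∈ Icc 1 r, y = u i := by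
  have hwF : w ∈ F := hF ▸ mem_insert w _
  by_cases hyF : y ∈ F
  · rw [hF] at hyF
    obtain ⟨i, hi, rfl⟩ := hyF.resolve_left hy.ne.symm
    exact Or.inr ⟨i, hi, rfl⟩
  · rcases (hout w hwF y hyF).1 hy with h | h | h
    · exact absurd h.1.symm (hwu 1 ⟨le_rfl, hr⟩)
    · exact Or.inl h.2
    · exact absurd h.1.symm (hwu r ⟨hr, le_rfl⟩)

lemma eq_of_adj_rim (hF : F = insert w (u '' Icc 1 r))
    (hinj : ∀ i ∈ Icc 1 r, ∀ j ∈ Icc 1 r, u i = u j → i = j)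
    (hwu : ∀ i ∈ Icc 1 r, u i ≠ w)
    (hin : ∀ a ∈ F, ∀ b ∈ F, (G.Adj a b ↔
      (∃ i ∈ Icc 1 r, (a = w ∧ b = u i) ∨ (a = u i ∧ b = w)) ∨
      (∃ i ∈ Icc 1 (r - 1), (a = u i ∧ b = u (i + 1)) ∨ (a = u (i + 1) ∧ b = u i))))
    (hout : ∀ a ∈ F, ∀ b ∉ F, (G.Adj a b ↔
      (a = u 1 ∧ b = u 0) ∨ (a = w ∧ b = x) ∨ (a = u r ∧ b = u (r + 1))))
    {t : ℕ} (ht : t ∈ Icc 1 r) {y : V} (hy : G.Adj (u t) y) :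
    y = w ∨ y = u (t - 1) ∨ y = u (t + 1) := by
  have htF : u t ∈ F := hF ▸ mem_insert_of_mem w ⟨t, ht, rfl⟩
  obtain ⟨ht1, htr⟩ := ht
  by_cases hyF : y ∈ F
  · rcases (hin _ htF y hyF).1 hy with ⟨i, -, h | h⟩ | ⟨i, ⟨hi1, hir⟩, h | h⟩
    · exact absurd h.1 (hwu t ⟨ht1, htr⟩)
    · exact Or.inl h.2
    · obtain rfl := hinj t ⟨ht1, htr⟩ i ⟨hi1, by omega⟩ h.1
      exact Or.inr (Or.inr h.2)
    · obtain rfl := hinj t ⟨ht1, htr⟩ (i + 1) ⟨by omega, by omega⟩ h.1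
      exact Or.inr (Or.inl h.2)
  · rcases (hout _ htF y hyF).1 hy with h | h | h
    · obtain rfl := hinj t ⟨ht1, htr⟩ 1 ⟨le_rfl, by omega⟩ h.1
      exact Or.inr (Or.inl h.2)
    · exact absurd h.1 (hwu t ⟨ht1, htr⟩)
    · obtain rfl := hinj t ⟨ht1, htr⟩ r ⟨by omega, le_rfl⟩ h.1
      exact Or.inr (Or.inr h.2)

variable {H : G.Subgraph}

lemma exists_hub_spoke (hr : 1 ≤ r) (hF : F = insert w (u '' Icc 1 r))
    (hwu : ∀ i ∈ Icc 1 r, u i ≠ w)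
    (hout : ∀ a ∈ F, ∀ b ∉ F, (G.Adj a b ↔
      (a = u 1 ∧ b = u 0) ∨ (a = w ∧ b = x) ∨ (a = u r ∧ b = u (r + 1))))
    (hH : ∀ v, (H.neighborSet v).ncard = 2) (hk : H.Adj w x) :
    ∃ a ∈ Icc 1 r, ∀ y, H.Adj w y ↔ y = x ∨ y = u a := by
  obtain ⟨y, hyx, hy⟩ := H.exists_adj_ne (hH w) x
  obtain ⟨a, ha, rfl⟩ := (eq_of_adj_hub hr hF hwu hout (H.adj_sub hy)).resolve_left hyx
  refine ⟨a, ha, fun y' => ⟨H.eq_or_eq_of_adj (hH w) hyx.symm hk hy, ?_⟩⟩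
  rintro (rfl | rfl) <;> assumption

lemma adj_rim_of_ne_spoke (hF : F = insert w (u '' Icc 1 r))
    (hinj : ∀ i ∈ Icc 1 r, ∀ j ∈ Icc 1 r, u i = u j → i = j)
    (hwu : ∀ i ∈ Icc 1 r, u i ≠ w) (hx : x ∉ F)
    (hin : ∀ a ∈ F, ∀ b ∈ F, (G.Adj a b ↔
      (∃ i ∈ Icc 1 r, (a = w ∧ b = u i) ∨ (a = u i ∧ b = w)) ∨
      (∃ i ∈ Icc 1 (r - 1), (a = u i ∧ b = u (i + 1)) ∨ (a = u (i + 1) ∧ b = u i))))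
    (hout : ∀ a ∈ F, ∀ b ∉ F, (G.Adj a b ↔
      (a = u 1 ∧ b = u 0) ∨ (a = w ∧ b = x) ∨ (a = u r ∧ b = u (r + 1))))
    (hH : ∀ v, (H.neighborSet v).ncard = 2) {a : ℕ} (ha : a ∈ Icc 1 r)
    (hw : ∀ y, H.Adj w y ↔ y = x ∨ y = u a) {t : ℕ} (ht : t ∈ Icc 1 r) (hta : t ≠ a) :
    H.Adj (u t) (u (t - 1)) ∧ H.Adj (u t) (u (t + 1)) := by
  refine H.adj_and_adj_of_neighborSet_subset_pair (hH _) fun y hy => ?_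
  rcases eq_of_adj_rim hF hinj hwu hin hout ht (H.adj_sub hy) with hyw | h | h
  · rcases (hw _).1 (hyw ▸ hy).symm with h | h
    · exact absurd (h ▸ hF ▸ mem_insert_of_mem w ⟨t, ht, rfl⟩) hx
    · exact absurd (hinj t ht a ha h) hta
  · exact Or.inl h
  · exact Or.inr h

lemma spoke_eq_one (hF : F = insert w (u '' Icc 1 r))
    (hinj : ∀ i ∈ Icc 1 r, ∀ j ∈ Icc 1 r, u i = u j → i = j)
    (hwu : ∀ i ∈ Icc 1 r, u i ≠ w) (hx : x ∉ F) (hur1 : u (r + 1) ∉ F)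
    (hin : ∀ a ∈ F, ∀ b ∈ F, (G.Adj a b ↔
      (∃ i ∈ Icc 1 r, (a = w ∧ b = u i) ∨ (a = u i ∧ b = w)) ∨
      (∃ i ∈ Icc 1 (r - 1), (a = u i ∧ b = u (i + 1)) ∨ (a = u (i + 1) ∧ b = u i))))
    (hout : ∀ a ∈ F, ∀ b ∉ F, (G.Adj a b ↔
      (a = u 1 ∧ b = u 0) ∨ (a = w ∧ b = x) ∨ (a = u r ∧ b = u (r + 1))))
    (hH : ∀ v, (H.neighborSet v).ncard = 2) (hl : H.Adj (u r) (u (r + 1))) {a : ℕ}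
    (ha : a ∈ Icc 1 r) (hw : ∀ y, H.Adj w y ↔ y = x ∨ y = u a) : a = 1 := by
  have rim := fun t (ht : t ∈ Icc 1 r) (hta : t ≠ a) =>
    adj_rim_of_ne_spoke hF hinj hwu hx hin hout hH ha hw ht hta
  obtain ⟨ha1, har⟩ := ha
  by_contra hne
  have hrimF : ∀ i ∈ Icc 1 r, u i ∈ F := fun i hi => hF ▸ mem_insert_of_mem w ⟨i, hi, rfl⟩
  have hwF : w ∈ F := hF ▸ mem_insert w _
  have hprev : H.Adj (u a) (u (a - 1)) := by
    simpa [Nat.sub_add_cancel ha1] using (rim (a - 1) ⟨by omega, by omega⟩ (by omega)).2.symm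
  obtain ⟨hnext, hfresh⟩ : H.Adj (u a) (u (a + 1)) ∧ u (a + 1) ≠ w ∧ u (a + 1) ≠ u (a - 1) := by
    rcases (show a < r ∨ a = r by omega) with h | rfl
    · refine ⟨by simpa using (rim (a + 1) ⟨by omega, h⟩ (by omega)).1.symm,
        hwu _ ⟨by omega, h⟩, fun he => ?_⟩
      have := hinj _ ⟨by omega, h⟩ _ ⟨by omega, by omega⟩ he
      omega
    · exact ⟨hl, fun he => hur1 (he ▸ hwF), fun he => hur1 (he ▸ hrimF _ ⟨by omega, by omega⟩)⟩
  exact (H.eq_or_eq_of_adj (hH _) (hwu _ ⟨by omega, by omega⟩).symm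
    ((hw _).2 (Or.inr rfl)).symm hprev hnext).elim hfresh.1 hfresh.2

lemma mem_edgeSet_inside_iff (hr : 1 ≤ r) (hF : F = insert w (u '' Icc 1 r))
    (hinj : ∀ i ∈ Icc 1 r, ∀ j ∈ Icc 1 r, u i = u j → i = j)
    (hwu : ∀ i ∈ Icc 1 r, u i ≠ w) (hx : x ∉ F)
    (hin : ∀ a ∈ F, ∀ b ∈ F, (G.Adj a b ↔
      (∃ i ∈ Icc 1 r, (a = w ∧ b = u i) ∨ (a = u i ∧ b = w)) ∨
      (∃ i ∈ Icc 1 (r - 1), (a = u i ∧ b = u (i + 1)) ∨ (a = u (i + 1) ∧ b = u i))))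
    (hout : ∀ a ∈ F, ∀ b ∉ F, (G.Adj a b ↔
      (a = u 1 ∧ b = u 0) ∨ (a = w ∧ b = x) ∨ (a = u r ∧ b = u (r + 1))))
    (hH : ∀ v, (H.neighborSet v).ncard = 2) (hw : ∀ y, H.Adj w y ↔ y = x ∨ y = u 1) (e : Sym2 V) :
    (e ∈ H.edgeSet ∧ ∀ z ∈ e, z ∈ F) ↔
      (e = s(w, u 1) ∨ ∃ i ∈ Icc 1 (r - 1), e = s(u i, u (i + 1))) := by
  have hrimF : ∀ i ∈ Icc 1 r, u i ∈ F := fun i hi => hF ▸ mem_insert_of_mem w ⟨i, hi, rfl⟩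
  have hwF : w ∈ F := hF ▸ mem_insert w _
  constructor
  · induction e using Sym2.ind with | _ p q => ?_
    rintro ⟨hpq : H.Adj p q, hzF⟩
    have hp := hzF p (Sym2.mem_mk_left p q)
    have hq := hzF q (Sym2.mem_mk_right p q)
    rcases (hin p hp q hq).1 (H.adj_sub hpq) with
      ⟨i, -, ⟨hp', hq'⟩ | ⟨hp', hq'⟩⟩ | ⟨i, hi, ⟨hp', hq'⟩ | ⟨hp', hq'⟩⟩ <;> subst p q
    · exact Or.inl (by rw [((hw _).1 hpq).resolve_left (fun h => hx (h ▸ hq))])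
    · exact Or.inl (by rw [((hw _).1 hpq.symm).resolve_left (fun h => hx (h ▸ hp)), Sym2.eq_swap])
    · exact Or.inr ⟨i, hi, rfl⟩
    · exact Or.inr ⟨i, hi, Sym2.eq_swap⟩
  · rintro (rfl | ⟨i, ⟨hi1, hir⟩, rfl⟩)
    · refine ⟨(hw _).2 (Or.inr rfl), fun z hz => ?_⟩
      rcases Sym2.mem_iff.1 hz with rfl | rfl
      exacts [hwF, hrimF 1 ⟨le_rfl, hr⟩]
    · refine ⟨?_, fun z hz => ?_⟩
      · simpa using (adj_rim_of_ne_spoke hF hinj hwu hx hin hout hH ⟨le_rfl, hr⟩ hw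
          (t := i + 1) ⟨by omega, by omega⟩ (by omega)).1.symm
      · rcases Sym2.mem_iff.1 hz with rfl | rfl
        exacts [hrimF i ⟨hi1, by omega⟩, hrimF (i + 1) ⟨by omega, by omega⟩]

end SimpleGraph.Fan

theorem stmt_7_general {V : Type*} [DecidableEq V] (G : SimpleGraph V)
    (r : ℕ) (hr : 2 ≤ r) (w x : V) (u : ℕ → V) (F : Set V)
    (hF : F = insert w (u '' Set.Icc 1 r))
    (hinj : ∀ i ∈ Set.Icc 1 r, ∀ j ∈ Set.Icc 1 r, u i = u j → i = j)
    (hwu : ∀ i ∈ Set.Icc 1 r, u i ≠ w)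
    (hx : x ∉ F) (hur1 : u (r + 1) ∉ F)
    (hin : ∀ a ∈ F, ∀ b ∈ F, (G.Adj a b ↔
      (∃ i ∈ Set.Icc 1 r, (a = w ∧ b = u i) ∨ (a = u i ∧ b = w)) ∨
      (∃ i ∈ Set.Icc 1 (r - 1), (a = u i ∧ b = u (i + 1)) ∨ (a = u (i + 1) ∧ b = u i))))
    (hout : ∀ a ∈ F, ∀ b ∉ F, (G.Adj a b ↔
      (a = u 1 ∧ b = u 0) ∨ (a = w ∧ b = x) ∨ (a = u r ∧ b = u (r + 1))))
    {v₀ : V} (τ : G.Walk v₀ v₀) (hτ : τ.IsHamiltonianCycle)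
    (hk : s(x, w) ∈ τ.edges) (hl : s(u r, u (r + 1)) ∈ τ.edges) :
    ∀ e : Sym2 V, (e ∈ τ.edges ∧ ∀ z ∈ e, z ∈ F) ↔
      (e = s(w, u 1) ∨ ∃ i ∈ Set.Icc 1 (r - 1), e = s(u i, u (i + 1))) := by
  have hr1 : 1 ≤ r := by omega
  have hH (v : V) : (τ.toSubgraph.neighborSet v).ncard = 2 :=
    hτ.isCycle.ncard_neighborSet_toSubgraph_eq_two (hτ.mem_support v)
  have hk' : τ.toSubgraph.Adj w x := (Walk.adj_toSubgraph_iff_mem_edges.2 hk).symm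
  obtain ⟨a, ha, hw⟩ := Fan.exists_hub_spoke hr1 hF hwu hout hH hk'
  obtain rfl := Fan.spoke_eq_one hF hinj hwu hx hur1 hin hout hH
    (Walk.adj_toSubgraph_iff_mem_edges.2 hl) ha hw
  intro e
  simpa only [Walk.mem_edges_toSubgraph] using
    Fan.mem_edgeSet_inside_iff hr1 hF hinj hwu hx hin hout hH hw e

/-- Left-traversal of a fan.  Let `G` contain a fan on distinct vertices
`w, u 1, …, u r` (`r ≥ 2`): the edges of `G` inside `F = {w, u 1, …, u r}` are
exactly the spokes `(w, u i)` (`1 ≤ i ≤ r`) and the rim edges `(u i, u (i+1))`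
(`1 ≤ i ≤ r-1`), and the only edges leaving `F` are `j = (u 0, u 1)`, `k = (x, w)`
and `l = (u r, u (r+1))` with `u 0, x, u (r+1) ∉ F`.  Then every Hamiltonian cycle
`τ` containing `k` and `l` contains, among the edges with both endpoints in `F`,
exactly the edges `(w, u 1), (u 1, u 2), …, (u (r-1), u r)`. -/
theorem stmt_7 {V : Type*} [Fintype V] [DecidableEq V] (G : SimpleGraph V)
    (r : ℕ) (hr : 2 ≤ r) (w x : V) (u : ℕ → V) (F : Set V)
    (hF : F = insert w (u '' Set.Icc 1 r))
    (hinj : ∀ i ∈ Set.Icc 1 r, ∀ j ∈ Set.Icc 1 r, u i = u j → i = j)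
    (hwu : ∀ i ∈ Set.Icc 1 r, u i ≠ w)
    (hu0 : u 0 ∉ F) (hx : x ∉ F) (hur1 : u (r + 1) ∉ F)
    (hin : ∀ a ∈ F, ∀ b ∈ F, (G.Adj a b ↔
      (∃ i ∈ Set.Icc 1 r, (a = w ∧ b = u i) ∨ (a = u i ∧ b = w)) ∨
      (∃ i ∈ Set.Icc 1 (r - 1), (a = u i ∧ b = u (i + 1)) ∨ (a = u (i + 1) ∧ b = u i))))
    (hout : ∀ a ∈ F, ∀ b ∉ F, (G.Adj a b ↔
      (a = u 1 ∧ b = u 0) ∨ (a = w ∧ b = x) ∨ (a = u r ∧ b = u (r + 1))))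
    {v₀ : V} (τ : G.Walk v₀ v₀) (hτ : τ.IsHamiltonianCycle)
    (hk : s(x, w) ∈ τ.edges) (hl : s(u r, u (r + 1)) ∈ τ.edges) :
    ∀ e : Sym2 V, (e ∈ τ.edges ∧ ∀ z ∈ e, z ∈ F) ↔
      (e = s(w, u 1) ∨ ∃ i ∈ Set.Icc 1 (r - 1), e = s(u i, u (i + 1))) :=
  stmt_7_general G r hr w x u F hF hinj hwu hx hur1 hin hout τ hτ hk hl
end

section
/- Let G be a finite simple graph containing a fan F on distinct vertices w, u_1, …, u_r (r ≥ 2) with cutset edges j = (u_0, u_1), k = (x, w), l = (u_r, u_{r+1}). Then every Hamiltonian cycle τ of G that contains both j and k contains, among the edges with both endpoints in {w, u_1, …, u_r}, exactly the edges (u_1, u_2), …, (u_{r−1}, u_r), (u_r, w); that is, τ traverses F by the subsequence u_1, u_2, …, u_r, w (a right-traversal). -/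
/-!
Every vertex of a Hamiltonian cycle has exactly two cycle neighbours. Follow the cycle along the
rim from `j = u 0 u 1`. If it reaches `u i` from `u (i-1)` and leaves by the spoke to `w`, then
`w` is saturated by `x` and `u i`, and `u i` by `u (i-1)` and `w`, so `u (i+1)` is left with the
single candidate neighbour `u (i+2)`, which is impossible. Hence the cycle runs `u 1, …, u r`.
At `u r` it must then take the spoke to `w`: otherwise the second cycle neighbour of `w` is a rim
vertex that is already saturated by its two rim neighbours. The same saturation rules out every
other spoke.
-/

open Set SimpleGraph

namespace SimpleGraph.Walk.IsCycle

variable {V : Type*} {G : SimpleGraph V} {v₀ v : V} {c : G.Walk v₀ v₀}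

theorem exists_adj_toSubgraph_pair (hc : c.IsCycle) (hv : v ∈ c.support) :
    ∃ a b, a ≠ b ∧ c.toSubgraph.Adj v a ∧ c.toSubgraph.Adj v b := by
  obtain ⟨a, b, hab, hN⟩ := ncard_eq_two.mp (hc.ncard_neighborSet_toSubgraph_eq_two hv)
  have ha : a ∈ c.toSubgraph.neighborSet v := hN ▸ mem_insert a {b}
  have hb : b ∈ c.toSubgraph.neighborSet v := hN ▸ mem_insert_of_mem a rfl
  exact ⟨a, b, hab, ha, hb⟩

theorem exists_adj_toSubgraph_ne (hc : c.IsCycle) {z : V} (hz : c.toSubgraph.Adj v z) :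
    ∃ z', z' ≠ z ∧ c.toSubgraph.Adj v z' := by
  obtain ⟨a, b, hab, ha, hb⟩ :=
    hc.exists_adj_toSubgraph_pair (c.mem_verts_toSubgraph.mp hz.fst_mem)
  by_cases hza : z = a
  · exact ⟨b, hza ▸ hab.symm, hb⟩
  · exact ⟨a, Ne.symm hza, ha⟩

theorem eq_or_eq_of_adj_toSubgraph (hc : c.IsCycle) {a b z : V} (hab : a ≠ b)
    (ha : c.toSubgraph.Adj v a) (hb : c.toSubgraph.Adj v b) (hz : c.toSubgraph.Adj v z) :
    z = a ∨ z = b := by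
  by_contra! h
  have hsub : {a, b, z} ⊆ c.toSubgraph.neighborSet v := by
    rintro y (rfl | rfl | rfl) <;> assumption
  have hle := ncard_le_ncard hsub c.finite_neighborSet_toSubgraph
  rw [ncard_eq_three.mpr ⟨a, b, z, hab, h.1.symm, h.2.symm, rfl⟩,
    hc.ncard_neighborSet_toSubgraph_eq_two (c.mem_verts_toSubgraph.mp ha.fst_mem)] at hle
  omega

end SimpleGraph.Walk.IsCycle

namespace SimpleGraph

/-- `w` is the hub and `u 1, …, u r` the rim; `u 0`, `x`, `u (r + 1)` are the outside ends of
the three cut edges. -/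
structure IsFan {V : Type*} (G : SimpleGraph V) (r : ℕ) (w x : V) (u : ℕ → V) (F : Set V) :
    Prop where
  two_le : 2 ≤ r
  eq_insert : F = insert w (u '' Icc 1 r)
  injOn : InjOn u (Icc 1 r)
  rim_ne_hub : ∀ i ∈ Icc 1 r, u i ≠ w
  u_zero_notMem : u 0 ∉ F
  x_notMem : x ∉ F
  u_last_succ_notMem : u (r + 1) ∉ F
  adj_inside : ∀ a ∈ F, ∀ b ∈ F, (G.Adj a b ↔
    (∃ i ∈ Icc 1 r, (a = w ∧ b = u i) ∨ (a = u i ∧ b = w)) ∨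
    (∃ i ∈ Icc 1 (r - 1), (a = u i ∧ b = u (i + 1)) ∨ (a = u (i + 1) ∧ b = u i)))
  adj_outside : ∀ a ∈ F, ∀ b ∉ F, (G.Adj a b ↔
    (a = u 1 ∧ b = u 0) ∨ (a = w ∧ b = x) ∨ (a = u r ∧ b = u (r + 1)))

namespace IsFan

variable {V : Type*} {G : SimpleGraph V} {r : ℕ} {w x : V} {u : ℕ → V} {F : Set V}

theorem hub_mem (hG : IsFan G r w x u F) : w ∈ F :=
  hG.eq_insert ▸ mem_insert w _

theorem rim_mem (hG : IsFan G r w x u F) {i : ℕ} (hi : i ∈ Icc 1 r) : u i ∈ F :=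
  hG.eq_insert ▸ mem_insert_of_mem w (mem_image_of_mem u hi)

theorem rim_notMem (hG : IsFan G r w x u F) {i : ℕ} (hi : i ≤ r + 1) (hi' : i ∉ Icc 1 r) :
    u i ∉ F := by
  obtain rfl | rfl : i = 0 ∨ i = r + 1 := by simp only [mem_Icc] at hi'; omega
  exacts [hG.u_zero_notMem, hG.u_last_succ_notMem]

theorem rim_ne_hub_of_le (hG : IsFan G r w x u F) {i : ℕ} (hi : i ≤ r + 1) : u i ≠ w := by
  by_cases hi' : i ∈ Icc 1 r
  · exact hG.rim_ne_hub i hi'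
  · exact fun h => hG.rim_notMem hi hi' (h ▸ hG.hub_mem)

theorem rim_ne_rim (hG : IsFan G r w x u F) {i j : ℕ} (hi : i ∈ Icc 1 r) (hj : j ≤ r + 1)
    (hij : i ≠ j) : u i ≠ u j := by
  by_cases hj' : j ∈ Icc 1 r
  · exact fun h => hij (hG.injOn hi hj' h)
  · exact fun h => hG.rim_notMem hj hj' (h ▸ hG.rim_mem hi)

theorem rim_pred_ne_rim_succ (hG : IsFan G r w x u F) {i : ℕ} (hi : i ∈ Icc 1 r) :
    u (i - 1) ≠ u (i + 1) := by
  have := hG.two_le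
  obtain ⟨hi1, hir⟩ := hi
  by_cases h1 : i = 1
  · subst h1
    exact (hG.rim_ne_rim (i := 2) (j := 0) ⟨by omega, by omega⟩ (by omega) (by omega)).symm
  · exact hG.rim_ne_rim ⟨by omega, by omega⟩ (by omega) (by omega)

theorem eq_of_adj_rim (hG : IsFan G r w x u F) {i : ℕ} (hi : i ∈ Icc 1 r) {z : V}
    (h : G.Adj (u i) z) : z = w ∨ z = u (i - 1) ∨ z = u (i + 1) := by
  have hiF := hG.rim_mem hi
  have hne := hG.rim_ne_hub i hi
  by_cases hz : z ∈ F
  · rcases (hG.adj_inside _ hiF z hz).mp h with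
      ⟨m, -, ⟨he, -⟩ | ⟨-, rfl⟩⟩ | ⟨m, hm, ⟨he, rfl⟩ | ⟨he, rfl⟩⟩
    · exact absurd he hne
    · exact Or.inl rfl
    · obtain rfl := hG.injOn hi ⟨hm.1, by grind⟩ he
      exact Or.inr (Or.inr rfl)
    · obtain rfl := hG.injOn hi ⟨by omega, by grind⟩ he
      exact Or.inr (Or.inl rfl)
  · rcases (hG.adj_outside _ hiF z hz).mp h with ⟨he, rfl⟩ | ⟨he, -⟩ | ⟨he, rfl⟩
    · obtain rfl := hG.injOn hi ⟨le_rfl, by grind [hG.two_le]⟩ he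
      exact Or.inr (Or.inl rfl)
    · exact absurd he hne
    · obtain rfl := hG.injOn hi ⟨by grind [hG.two_le], le_rfl⟩ he
      exact Or.inr (Or.inr rfl)

theorem eq_of_adj_hub (hG : IsFan G r w x u F) {z : V} (h : G.Adj w z) :
    z = x ∨ ∃ m ∈ Icc 1 r, z = u m := by
  have := hG.two_le
  by_cases hz : z ∈ F
  · rcases (hG.adj_inside _ hG.hub_mem z hz).mp h with
      ⟨m, hm, ⟨-, rfl⟩ | ⟨he, -⟩⟩ | ⟨m, hm, ⟨he, -⟩ | ⟨he, -⟩⟩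
    · exact Or.inr ⟨m, hm, rfl⟩
    · exact absurd he.symm (hG.rim_ne_hub m hm)
    · exact absurd he.symm (hG.rim_ne_hub_of_le (by grind))
    · exact absurd he.symm (hG.rim_ne_hub_of_le (by grind))
  · rcases (hG.adj_outside _ hG.hub_mem z hz).mp h with ⟨he, -⟩ | ⟨-, rfl⟩ | ⟨he, -⟩
    · exact absurd he.symm (hG.rim_ne_hub_of_le (by omega))
    · exact Or.inl rfl
    · exact absurd he.symm (hG.rim_ne_hub_of_le (by omega))

section Tour

variable {v₀ : V} {τ : G.Walk v₀ v₀}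

theorem not_adj_toSubgraph_rim_hub (hG : IsFan G r w x u F) (hτ : τ.IsCycle) {m : ℕ}
    (hm : m ∈ Icc 1 r) (hpred : τ.toSubgraph.Adj (u m) (u (m - 1)))
    (hsucc : τ.toSubgraph.Adj (u m) (u (m + 1))) : ¬ τ.toSubgraph.Adj (u m) w := fun h =>
  (hτ.eq_or_eq_of_adj_toSubgraph (hG.rim_pred_ne_rim_succ hm) hpred hsucc h).elim
    (fun he => hG.rim_ne_hub_of_le (by have := hm.2; omega) he.symm)
    (fun he => hG.rim_ne_hub_of_le (by have := hm.2; omega) he.symm)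

theorem adj_toSubgraph_rim_succ_of_pred (hG : IsFan G r w x u F) (hτ : τ.IsCycle) {i : ℕ}
    (hi : i ∈ Icc 1 (r - 1)) (hsupp : u (i + 1) ∈ τ.support) (hk : τ.toSubgraph.Adj w x)
    (hpred : τ.toSubgraph.Adj (u i) (u (i - 1))) : τ.toSubgraph.Adj (u i) (u (i + 1)) := by
  obtain ⟨hi1, hir⟩ := hi
  obtain ⟨z, hz, hiz⟩ := hτ.exists_adj_toSubgraph_ne hpred
  rcases hG.eq_of_adj_rim ⟨hi1, by omega⟩ hiz.adj_sub with rfl | rfl | rfl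
  · have hnext : ∀ y, τ.toSubgraph.Adj (u (i + 1)) y → y = u (i + 2) := by
      intro y hy
      rcases hG.eq_of_adj_rim ⟨by omega, by omega⟩ hy.adj_sub with rfl | rfl | rfl
      · have hxi : x ≠ u i := fun h => hG.x_notMem (h ▸ hG.rim_mem ⟨hi1, by omega⟩)
        rcases hτ.eq_or_eq_of_adj_toSubgraph hxi hk hiz.symm hy.symm with h | h
        · exact absurd (h ▸ hG.rim_mem ⟨by omega, by omega⟩) hG.x_notMem
        · exact absurd h (hG.rim_ne_rim ⟨by omega, by omega⟩ (by omega) (by omega))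
      · rw [Nat.add_sub_cancel] at hy
        exact absurd hiz (hG.not_adj_toSubgraph_rim_hub hτ ⟨hi1, by omega⟩ hpred hy.symm)
      · rfl
    obtain ⟨a, b, hab, ha, hb⟩ := hτ.exists_adj_toSubgraph_pair hsupp
    exact absurd ((hnext a ha).trans (hnext b hb).symm) hab
  · exact absurd rfl hz
  · exact hiz

theorem adj_toSubgraph_rim_succ (hG : IsFan G r w x u F) [DecidableEq V]
    (hτ : τ.IsHamiltonianCycle) (hj : τ.toSubgraph.Adj (u 0) (u 1))
    (hk : τ.toSubgraph.Adj w x) {i : ℕ} (hi : i < r) : τ.toSubgraph.Adj (u i) (u (i + 1)) := by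
  induction i with
  | zero => exact hj
  | succ i ih =>
    refine hG.adj_toSubgraph_rim_succ_of_pred hτ.isCycle ⟨by omega, by omega⟩
      (hτ.mem_support _) hk ?_
    simpa using (ih (by omega)).symm

theorem adj_toSubgraph_rim_pred (hG : IsFan G r w x u F) [DecidableEq V]
    (hτ : τ.IsHamiltonianCycle) (hj : τ.toSubgraph.Adj (u 0) (u 1))
    (hk : τ.toSubgraph.Adj w x) {i : ℕ} (hi : i ∈ Icc 1 r) :
    τ.toSubgraph.Adj (u i) (u (i - 1)) := by
  obtain ⟨k, rfl⟩ : ∃ k, i = k + 1 := ⟨i - 1, by grind⟩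
  simpa using (hG.adj_toSubgraph_rim_succ hτ hj hk (i := k) (by grind)).symm

theorem adj_toSubgraph_last_hub (hG : IsFan G r w x u F) [DecidableEq V]
    (hτ : τ.IsHamiltonianCycle) (hj : τ.toSubgraph.Adj (u 0) (u 1))
    (hk : τ.toSubgraph.Adj w x) : τ.toSubgraph.Adj (u r) w := by
  have := hG.two_le
  have hr : r ∈ Icc 1 r := ⟨by omega, le_rfl⟩
  obtain ⟨z, hz, hrz⟩ :=
    hτ.isCycle.exists_adj_toSubgraph_ne (hG.adj_toSubgraph_rim_pred hτ hj hk hr)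
  rcases hG.eq_of_adj_rim hr hrz.adj_sub with rfl | rfl | rfl
  · exact hrz
  · exact absurd rfl hz
  · obtain ⟨y, hyx, hwy⟩ := hτ.isCycle.exists_adj_toSubgraph_ne hk
    rcases hG.eq_of_adj_hub hwy.adj_sub with rfl | ⟨m, hm, rfl⟩
    · exact absurd rfl hyx
    · have hsucc : τ.toSubgraph.Adj (u m) (u (m + 1)) := by
        rcases eq_or_lt_of_le hm.2 with rfl | hmr
        · exact hrz
        · exact hG.adj_toSubgraph_rim_succ hτ hj hk hmr
      exact absurd hwy.symm (hG.not_adj_toSubgraph_rim_hub hτ.isCycle hm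
        (hG.adj_toSubgraph_rim_pred hτ hj hk hm) hsucc)

theorem eq_of_adj_toSubgraph_hub_rim (hG : IsFan G r w x u F) [DecidableEq V]
    (hτ : τ.IsHamiltonianCycle) (hj : τ.toSubgraph.Adj (u 0) (u 1))
    (hk : τ.toSubgraph.Adj w x) {m : ℕ} (hm : m ∈ Icc 1 r) (h : τ.toSubgraph.Adj w (u m)) :
    m = r := by
  by_contra hmr
  exact hG.not_adj_toSubgraph_rim_hub hτ.isCycle hm (hG.adj_toSubgraph_rim_pred hτ hj hk hm)
    (hG.adj_toSubgraph_rim_succ hτ hj hk (lt_of_le_of_ne hm.2 hmr)) h.symm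

theorem adj_toSubgraph_inside (hG : IsFan G r w x u F) [DecidableEq V]
    (hτ : τ.IsHamiltonianCycle) (hj : τ.toSubgraph.Adj (u 0) (u 1))
    (hk : τ.toSubgraph.Adj w x) {a b : V} (ha : a ∈ F) (hb : b ∈ F)
    (hab : τ.toSubgraph.Adj a b) :
    s(a, b) = s(u r, w) ∨ ∃ i ∈ Icc 1 (r - 1), s(a, b) = s(u i, u (i + 1)) := by
  rcases (hG.adj_inside a ha b hb).mp hab.adj_sub with
    ⟨m, hm, ⟨rfl, rfl⟩ | ⟨rfl, rfl⟩⟩ | ⟨m, hm, ⟨rfl, rfl⟩ | ⟨rfl, rfl⟩⟩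
  · obtain rfl := hG.eq_of_adj_toSubgraph_hub_rim hτ hj hk hm hab
    exact Or.inl Sym2.eq_swap
  · obtain rfl := hG.eq_of_adj_toSubgraph_hub_rim hτ hj hk hm hab.symm
    exact Or.inl rfl
  · exact Or.inr ⟨m, hm, rfl⟩
  · exact Or.inr ⟨m, hm, Sym2.eq_swap⟩

end Tour

end IsFan

end SimpleGraph

theorem stmt_8_general {V : Type*} [DecidableEq V] (G : SimpleGraph V)
    (r : ℕ) (hr : 2 ≤ r) (w x : V) (u : ℕ → V) (F : Set V)
    (hF : F = insert w (u '' Set.Icc 1 r))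
    (hinj : ∀ i ∈ Set.Icc 1 r, ∀ j ∈ Set.Icc 1 r, u i = u j → i = j)
    (hwu : ∀ i ∈ Set.Icc 1 r, u i ≠ w)
    (hu0 : u 0 ∉ F) (hx : x ∉ F) (hur1 : u (r + 1) ∉ F)
    (hin : ∀ a ∈ F, ∀ b ∈ F, (G.Adj a b ↔
      (∃ i ∈ Set.Icc 1 r, (a = w ∧ b = u i) ∨ (a = u i ∧ b = w)) ∨
      (∃ i ∈ Set.Icc 1 (r - 1), (a = u i ∧ b = u (i + 1)) ∨ (a = u (i + 1) ∧ b = u i))))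
    (hout : ∀ a ∈ F, ∀ b ∉ F, (G.Adj a b ↔
      (a = u 1 ∧ b = u 0) ∨ (a = w ∧ b = x) ∨ (a = u r ∧ b = u (r + 1))))
    {v₀ : V} (τ : G.Walk v₀ v₀) (hτ : τ.IsHamiltonianCycle)
    (hj : s(u 0, u 1) ∈ τ.edges) (hk : s(x, w) ∈ τ.edges) :
    ∀ e : Sym2 V, (e ∈ τ.edges ∧ ∀ z ∈ e, z ∈ F) ↔
      (e = s(u r, w) ∨ ∃ i ∈ Set.Icc 1 (r - 1), e = s(u i, u (i + 1))) := by
  have hG : IsFan G r w x u F :=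
    ⟨hr, hF, fun i hi j hj => hinj i hi j hj, hwu, hu0, hx, hur1, hin, hout⟩
  have hj' := Walk.adj_toSubgraph_iff_mem_edges.mpr hj
  have hk' := (Walk.adj_toSubgraph_iff_mem_edges.mpr hk).symm
  intro e
  induction e using Sym2.inductionOn with | _ a b => ?_
  simp only [← Walk.adj_toSubgraph_iff_mem_edges, Sym2.mem_iff, forall_eq_or_imp, forall_eq]
  constructor
  · rintro ⟨hab, ha, hb⟩
    exact hG.adj_toSubgraph_inside hτ hj' hk' ha hb hab
  · rintro (h | ⟨i, hi, h⟩) <;> obtain ⟨rfl, rfl⟩ | ⟨rfl, rfl⟩ := Sym2.eq_iff.mp h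
    · exact ⟨hG.adj_toSubgraph_last_hub hτ hj' hk', hG.rim_mem ⟨by omega, le_rfl⟩, hG.hub_mem⟩
    · exact ⟨(hG.adj_toSubgraph_last_hub hτ hj' hk').symm, hG.hub_mem,
        hG.rim_mem ⟨by omega, le_rfl⟩⟩
    all_goals have hir : i < r := by grind
    · exact ⟨hG.adj_toSubgraph_rim_succ hτ hj' hk' hir, hG.rim_mem ⟨hi.1, hir.le⟩,
        hG.rim_mem ⟨by omega, hir⟩⟩
    · exact ⟨(hG.adj_toSubgraph_rim_succ hτ hj' hk' hir).symm, hG.rim_mem ⟨by omega, hir⟩,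
        hG.rim_mem ⟨hi.1, hir.le⟩⟩

/-- Right-traversal of a fan.  Let `G` contain a fan on distinct vertices
`w, u 1, …, u r` (`r ≥ 2`): the edges of `G` inside `F = {w, u 1, …, u r}` are
exactly the spokes `(w, u i)` (`1 ≤ i ≤ r`) and the rim edges `(u i, u (i+1))`
(`1 ≤ i ≤ r-1`), and the only edges leaving `F` are `j = (u 0, u 1)`, `k = (x, w)`
and `l = (u r, u (r+1))` with `u 0, x, u (r+1) ∉ F`.  Then every Hamiltonian cycle
`τ` containing `j` and `k` contains, among the edges with both endpoints in `F`,
exactly the edges `(u 1, u 2), …, (u (r-1), u r), (u r, w)`. -/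
theorem stmt_8 {V : Type*} [Fintype V] [DecidableEq V] (G : SimpleGraph V)
    (r : ℕ) (hr : 2 ≤ r) (w x : V) (u : ℕ → V) (F : Set V)
    (hF : F = insert w (u '' Set.Icc 1 r))
    (hinj : ∀ i ∈ Set.Icc 1 r, ∀ j ∈ Set.Icc 1 r, u i = u j → i = j)
    (hwu : ∀ i ∈ Set.Icc 1 r, u i ≠ w)
    (hu0 : u 0 ∉ F) (hx : x ∉ F) (hur1 : u (r + 1) ∉ F)
    (hin : ∀ a ∈ F, ∀ b ∈ F, (G.Adj a b ↔
      (∃ i ∈ Set.Icc 1 r, (a = w ∧ b = u i) ∨ (a = u i ∧ b = w)) ∨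
      (∃ i ∈ Set.Icc 1 (r - 1), (a = u i ∧ b = u (i + 1)) ∨ (a = u (i + 1) ∧ b = u i))))
    (hout : ∀ a ∈ F, ∀ b ∉ F, (G.Adj a b ↔
      (a = u 1 ∧ b = u 0) ∨ (a = w ∧ b = x) ∨ (a = u r ∧ b = u (r + 1))))
    {v₀ : V} (τ : G.Walk v₀ v₀) (hτ : τ.IsHamiltonianCycle)
    (hj : s(u 0, u 1) ∈ τ.edges) (hk : s(x, w) ∈ τ.edges) :
    ∀ e : Sym2 V, (e ∈ τ.edges ∧ ∀ z ∈ e, z ∈ F) ↔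
      (e = s(u r, w) ∨ ∃ i ∈ Set.Icc 1 (r - 1), e = s(u i, u (i + 1))) :=
  stmt_8_general G r hr w x u F hF hinj hwu hu0 hx hur1 hin hout τ hτ hj hk
end

section
/- Let D be the 4-fan gadget: the simple graph on the seven vertices ℓ, u_1, u_2, u_3, u_4, r, v whose edges are the path edges (ℓ, u_1), (u_1, u_2), (u_2, u_3), (u_3, u_4), (u_4, r) and the spokes (v, u_i) for 1 ≤ i ≤ 4. Then the Hamiltonian paths of D from ℓ to r are exactly the three paths ℓ, u_1, …, u_i, v, u_{i+1}, …, u_4, r for i ∈ {1, 2, 3}. In particular, every Hamiltonian ℓ–r path of D contains all of the path edges except exactly one of (u_1, u_2), (u_2, u_3), (u_3, u_4), which it skips to detour through v. -/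
/-- The 4-fan gadget on seven vertices, labelled as elements of `Fin 7`:
`ℓ = 0`, `u₁ = 1`, `u₂ = 2`, `u₃ = 3`, `u₄ = 4`, `r = 5`, `v = 6`.
Its edges are the path edges `(ℓ,u₁), (u₁,u₂), (u₂,u₃), (u₃,u₄), (u₄,r)`
and the spokes `(v,uᵢ)` for `1 ≤ i ≤ 4`. -/
def fourFanGadget : SimpleGraph (Fin 7) :=
  SimpleGraph.fromRel (fun a b =>
    (a, b) ∈ ([(0, 1), (1, 2), (2, 3), (3, 4), (4, 5),
               (6, 1), (6, 2), (6, 3), (6, 4)] : List (Fin 7 × Fin 7)))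

/-! A Hamiltonian `ℓ`–`r` path has exactly seven vertices, so its support is `ℓ, a, b, c, d, e, r`
with `a, …, e` distinct and consecutive vertices adjacent; checking the `7⁵` choices leaves only
the three detours through `v`. Each of these is an adjacency chain visiting every vertex once,
hence the support of a Hamiltonian walk. -/

theorem List.exists_eq_of_length_eq_seven {α : Type*} {l : List α} (h : l.length = 7) :
    ∃ a b c d e f g, l = [a, b, c, d, e, f, g] := by
  rcases l with _ | ⟨a, _ | ⟨b, _ | ⟨c, _ | ⟨d, _ | ⟨e, _ | ⟨f, _ | ⟨g, _ | ⟨_, _⟩⟩⟩⟩⟩⟩⟩⟩ <;>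
    simp_all

namespace fourFanGadget

instance : DecidableRel fourFanGadget.Adj := fun a b =>
  decidable_of_iff _ (SimpleGraph.fromRel_adj _ a b).symm

def hamiltonianSupports : List (List (Fin 7)) :=
  [[0, 1, 6, 2, 3, 4, 5], [0, 1, 2, 6, 3, 4, 5], [0, 1, 2, 3, 6, 4, 5]]

theorem isChain_adj_of_mem_hamiltonianSupports :
    ∀ l ∈ hamiltonianSupports, l.IsChain fourFanGadget.Adj := by
  decide

theorem count_eq_one_of_mem_hamiltonianSupports :
    ∀ l ∈ hamiltonianSupports, ∀ a : Fin 7, l.count a = 1 := by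
  decide

theorem mem_hamiltonianSupports_of_isChain_of_nodup :
    ∀ a b c d e : Fin 7, [0, a, b, c, d, e, 5].IsChain fourFanGadget.Adj →
      [0, a, b, c, d, e, 5].Nodup → [0, a, b, c, d, e, 5] ∈ hamiltonianSupports := by
  decide

theorem isHamiltonian_iff (P : fourFanGadget.Walk 0 5) :
    P.IsHamiltonian ↔ P.support ∈ hamiltonianSupports := by
  refine ⟨fun hP => ?_, fun h => count_eq_one_of_mem_hamiltonianSupports _ h⟩
  obtain ⟨x, a, b, c, d, e, y, hsupp⟩ :=
    List.exists_eq_of_length_eq_seven (l := P.support) (by simp [hP.length_support])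
  have hx : x = 0 := by
    have h := P.cons_tail_support
    simp only [hsupp, List.tail_cons, List.cons.injEq] at h
    exact h.1.symm
  have hy : y = 5 := by
    have h := P.getLast_support
    simp only [hsupp] at h
    simpa using h
  subst hx hy
  rw [hsupp]
  exact mem_hamiltonianSupports_of_isChain_of_nodup a b c d e
    (hsupp ▸ P.isChain_adj_support) (hsupp ▸ hP.isPath.support_nodup)

theorem exists_walk_support_eq :
    ∀ l ∈ hamiltonianSupports, ∃ P : fourFanGadget.Walk 0 5, P.support = l := by
  intro l hl
  have hchain := isChain_adj_of_mem_hamiltonianSupports l hl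
  simp only [hamiltonianSupports, List.mem_cons, List.not_mem_nil, or_false] at hl
  rcases hl with rfl | rfl | rfl <;>
    exact ⟨.ofSupport _ (List.cons_ne_nil _ _) hchain, SimpleGraph.Walk.support_ofSupport _ _⟩

end fourFanGadget

/-- The Hamiltonian `ℓ`–`r` paths of the 4-fan gadget are exactly the three paths
`ℓ, u₁, …, u_i, v, u_{i+1}, …, u₄, r` for `i ∈ {1, 2, 3}`; each of the three does
occur.  In particular every Hamiltonian `ℓ`–`r` path skips exactly one of the
middle outer edges `(u₁,u₂), (u₂,u₃), (u₃,u₄)` to detour through `v`. -/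
theorem stmt_11 :
    (∀ P : fourFanGadget.Walk 0 5, (P.IsPath ∧ P.IsHamiltonian) ↔
      (P.support = [0, 1, 6, 2, 3, 4, 5] ∨ P.support = [0, 1, 2, 6, 3, 4, 5] ∨
        P.support = [0, 1, 2, 3, 6, 4, 5])) ∧
    (∀ l ∈ ([[0, 1, 6, 2, 3, 4, 5], [0, 1, 2, 6, 3, 4, 5],
        [0, 1, 2, 3, 6, 4, 5]] : List (List (Fin 7))),
      ∃ P : fourFanGadget.Walk 0 5, P.support = l) := by
  refine ⟨fun P => ?_, fourFanGadget.exists_walk_support_eq⟩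
  rw [and_iff_right_of_imp SimpleGraph.Walk.IsHamiltonian.isPath, fourFanGadget.isHamiltonian_iff]
  simp [fourFanGadget.hamiltonianSupports]
end

section
/- Let G be a finite simple graph on n ≥ 5 vertices, let c assign a real cost to each edge of G, and let q assign a real cost to each pair of edges of G with q(e, f) = q(f, e). If a Hamiltonian cycle τ* of G minimizes the STSP(3) cost over all Hamiltonian cycles of G, then τ* also minimizes the TSP(3) cost over all Hamiltonian cycles of G. -/
open Finset

/-- A tour on `n` vertices is given by distinct vertices `v 0, …, v (n-1)` in cyclic
order; its `i`-th edge is `s(v i, v (i+1))` (indices mod `n`). -/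
def tourEdge {V : Type*} {n : ℕ} [NeZero n] (v : ZMod n → V) (i : ZMod n) : Sym2 V :=
  s(v i, v (i + 1))

/-- `v : ZMod n → V` represents a Hamiltonian cycle of `G` (when `Fintype.card V = n`):
the vertices `v 0, …, v (n-1)` are distinct (hence all of `V`) and consecutive
vertices are adjacent in `G`. -/
def IsHamCycleSeq {V : Type*} {n : ℕ} [NeZero n] (G : SimpleGraph V)
    (v : ZMod n → V) : Prop :=
  Function.Injective v ∧ ∀ i : ZMod n, G.Adj (v i) (v (i + 1))

/-- `δ(3,τ)`: the set of unordered pairs of tour edges that are 2-neighbours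
(consecutive) or 3-neighbours (two apart), each pair counted once. -/
noncomputable def delta3 {V : Type*} [DecidableEq V] {n : ℕ} [NeZero n]
    (v : ZMod n → V) : Finset (Sym2 (Sym2 V)) :=
  (univ.image fun i : ZMod n => s(tourEdge v i, tourEdge v (i + 1))) ∪
    (univ.image fun i : ZMod n => s(tourEdge v i, tourEdge v (i + 2)))

/-- The STSP(3) cost of a tour: the sum over consecutive edge triples
`(eᵢ, eᵢ₊₁, eᵢ₊₂)` of `q'(e,f,g) = q(e,g) + (q(e,f)+q(f,g))/2 + (c(e)+c(f)+c(g))/3`. -/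
noncomputable def stsp3Cost {V : Type*} {n : ℕ} [NeZero n]
    (c : Sym2 V → ℝ) (q : Sym2 V → Sym2 V → ℝ) (v : ZMod n → V) : ℝ :=
  ∑ i : ZMod n,
    (q (tourEdge v i) (tourEdge v (i + 2)) +
      (q (tourEdge v i) (tourEdge v (i + 1)) +
        q (tourEdge v (i + 1)) (tourEdge v (i + 2))) / 2 +
      (c (tourEdge v i) + c (tourEdge v (i + 1)) + c (tourEdge v (i + 2))) / 3)

/-- The TSP(3) cost of a tour: `Σ_{{e,f} ∈ δ(3,τ)} q(e,f) + Σ_{e ∈ τ} c(e)`. -/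
noncomputable def tsp3Cost {V : Type*} [DecidableEq V] {n : ℕ} [NeZero n]
    (c : Sym2 V → ℝ) (q : Sym2 V → Sym2 V → ℝ) (hq : ∀ a b, q a b = q b a)
    (v : ZMod n → V) : ℝ :=
  (∑ p ∈ delta3 v, Sym2.lift ⟨q, hq⟩ p) + ∑ i : ZMod n, c (tourEdge v i)

/-!
For `n ≥ 5` the two objectives agree on every tour, so they have the same minimizers.
Both are sums of `q` over the 2- and 3-neighbour pairs and of `c` over the edges: each
pair `(eᵢ, eᵢ₊₂)` occurs in exactly one triple, each pair `(eᵢ, eᵢ₊₁)` in two triples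
with weight `1/2`, and each edge in three triples with weight `1/3`. For `n ≥ 5` the
pairs `{eᵢ, eᵢ₊₁}` and `{eᵢ, eᵢ₊₂}` are pairwise distinct, so `δ(3,τ)` has exactly `2n`
elements and the sum over it splits into the two cyclic sums.
-/

namespace ZMod

theorem natCast_ne_zero_of_pos_of_lt {n k : ℕ} (hk : 0 < k) (hkn : k < n) :
    (k : ZMod n) ≠ 0 := by
  rw [Ne, natCast_eq_zero_iff]
  exact fun h => (Nat.le_of_dvd hk h).not_gt hkn

end ZMod

section Tour

variable {V : Type*} {n : ℕ} [NeZero n] {v : ZMod n → V}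

theorem tourEdge_injective (h2 : (2 : ZMod n) ≠ 0) (hv : Function.Injective v) :
    Function.Injective (tourEdge v) := by
  intro i j h
  rcases Sym2.eq_iff.1 h with ⟨hij, -⟩ | ⟨hij, hji⟩
  · exact hv hij
  · exact absurd (by linear_combination hv hji - hv hij) h2

theorem eq_or_add_eq_zero_of_mk_tourEdge_eq (hE : Function.Injective (tourEdge v))
    {i j a b : ZMod n}
    (h : s(tourEdge v i, tourEdge v (i + a)) = s(tourEdge v j, tourEdge v (j + b))) :
    (i = j ∧ a = b) ∨ a + b = 0 := by
  rcases Sym2.eq_iff.1 h with ⟨hij, hab⟩ | ⟨hij, hji⟩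
  · have hij := hE hij
    exact Or.inl ⟨hij, by linear_combination hE hab - hij⟩
  · exact Or.inr (by linear_combination hE hji - hE hij)

variable [DecidableEq V]

theorem sum_image_mk_tourEdge (hE : Function.Injective (tourEdge v)) {a : ZMod n}
    (ha : a + a ≠ 0) (f : Sym2 (Sym2 V) → ℝ) :
    ∑ p ∈ univ.image (fun i => s(tourEdge v i, tourEdge v (i + a))), f p =
      ∑ i, f s(tourEdge v i, tourEdge v (i + a)) := by
  refine sum_image fun i _ j _ h => ?_
  rcases eq_or_add_eq_zero_of_mk_tourEdge_eq hE h with ⟨hij, -⟩ | h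
  · exact hij
  · exact absurd h ha

theorem sum_delta3 (hn : 5 ≤ n) (hv : Function.Injective v) (f : Sym2 (Sym2 V) → ℝ) :
    ∑ p ∈ delta3 v, f p =
      ∑ i, f s(tourEdge v i, tourEdge v (i + 1)) +
        ∑ i, f s(tourEdge v i, tourEdge v (i + 2)) := by
  have hk : ∀ k : ℕ, 0 < k → k < 5 → (k : ZMod n) ≠ 0 := fun k hk hk5 =>
    ZMod.natCast_ne_zero_of_pos_of_lt hk (by omega)
  have h1 : (1 : ZMod n) ≠ 0 := by exact_mod_cast hk 1 (by norm_num) (by norm_num)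
  have h2 : (2 : ZMod n) ≠ 0 := by exact_mod_cast hk 2 (by norm_num) (by norm_num)
  have h3 : (1 + 2 : ZMod n) ≠ 0 := by exact_mod_cast hk 3 (by norm_num) (by norm_num)
  have h4 : (2 + 2 : ZMod n) ≠ 0 := by exact_mod_cast hk 4 (by norm_num) (by norm_num)
  have hE := tourEdge_injective h2 hv
  have hdisj : Disjoint
      (univ.image fun i : ZMod n => s(tourEdge v i, tourEdge v (i + 1)))
      (univ.image fun i : ZMod n => s(tourEdge v i, tourEdge v (i + 2))) := by
    simp only [disjoint_left, mem_image, mem_univ, true_and, not_exists]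
    rintro _ ⟨i, rfl⟩ j h
    rcases eq_or_add_eq_zero_of_mk_tourEdge_eq hE h.symm with ⟨-, h12⟩ | h
    · exact h1 (by linear_combination -h12)
    · exact h3 (by linear_combination h)
  rw [delta3, sum_union hdisj, sum_image_mk_tourEdge hE (by simpa [one_add_one_eq_two]),
    sum_image_mk_tourEdge hE h4]

theorem tsp3Cost_eq_stsp3Cost (hn : 5 ≤ n) (hv : Function.Injective v)
    (c : Sym2 V → ℝ) (q : Sym2 V → Sym2 V → ℝ) (hq : ∀ a b, q a b = q b a) :
    tsp3Cost c q hq v = stsp3Cost c q v := by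
  have shift (k : ZMod n) (F : ZMod n → ℝ) : ∑ i, F (i + k) = ∑ i, F i :=
    Equiv.sum_comp (Equiv.addRight k) F
  have hq12 : ∑ i, q (tourEdge v (i + 1)) (tourEdge v (i + 2)) =
      ∑ i, q (tourEdge v i) (tourEdge v (i + 1)) := by
    simpa only [add_assoc, one_add_one_eq_two] using
      shift 1 fun i => q (tourEdge v i) (tourEdge v (i + 1))
  rw [tsp3Cost, sum_delta3 hn hv, stsp3Cost]
  simp only [Sym2.lift_mk, add_div, sum_add_distrib, ← sum_div, hq12,
    shift 1 fun i => c (tourEdge v i), shift 2 fun i => c (tourEdge v i)]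
  ring

end Tour

theorem stmt_13_general {V : Type*} [DecidableEq V] (n : ℕ) [NeZero n]
    (hn : 5 ≤ n) (G : SimpleGraph V)
    (c : Sym2 V → ℝ) (q : Sym2 V → Sym2 V → ℝ) (hq : ∀ a b, q a b = q b a)
    (vstar : ZMod n → V) (hstar : IsHamCycleSeq G vstar)
    (hmin : ∀ v' : ZMod n → V, IsHamCycleSeq G v' →
      stsp3Cost c q vstar ≤ stsp3Cost c q v') :
    ∀ v' : ZMod n → V, IsHamCycleSeq G v' →
      tsp3Cost c q hq vstar ≤ tsp3Cost c q hq v' := by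
  intro v' hv'
  rw [tsp3Cost_eq_stsp3Cost hn hstar.1, tsp3Cost_eq_stsp3Cost hn hv'.1]
  exact hmin v' hv'

/-- If a Hamiltonian cycle `τ*` of a graph `G` on `n ≥ 5` vertices minimizes the
STSP(3) cost over all Hamiltonian cycles of `G`, then it also minimizes the
TSP(3) cost over all Hamiltonian cycles of `G`. -/
theorem stmt_13 {V : Type*} [Fintype V] [DecidableEq V] (n : ℕ) [NeZero n]
    (hn : 5 ≤ n) (hcard : Fintype.card V = n) (G : SimpleGraph V)
    (c : Sym2 V → ℝ) (q : Sym2 V → Sym2 V → ℝ) (hq : ∀ a b, q a b = q b a)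
    (vstar : ZMod n → V) (hstar : IsHamCycleSeq G vstar)
    (hmin : ∀ v' : ZMod n → V, IsHamCycleSeq G v' →
      stsp3Cost c q vstar ≤ stsp3Cost c q v') :
    ∀ v' : ZMod n → V, IsHamCycleSeq G v' →
      tsp3Cost c q hq vstar ≤ tsp3Cost c q hq v' :=
  stmt_13_general n hn G c q hq vstar hstar hmin
end
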